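/- Let (A, μ, μ_p) be a Poisson k-algebra, B a commutative local Artinian k-algebra with maximal ideal m and residue field B/m ≅ k, Ã := A ⊗_k B, and let μ̃, μ̃_p denote the B-bilinear extensions of μ, μ_p to Ã. Let ξ, ξ_p : Ã × Ã → A ⊗_k m ⊆ Ã be B-bilinear maps with ξ symmetric and ξ_p skew-symmetric. Then (μ̃+ξ, μ̃_p+ξ_p) is a Poisson B-algebra structure on à (a commutative associative B-bilinear product together with a skew B-bilinear bracket satisfying Leibniz and Jacobi, reducing modulo m to the given Poisson structure on A) if and only if the Maurer–Cartan equations hold: [μ̃+ξ, μ̃+ξ] = 0, [μ̃+ξ, μ̃_p+ξ_p] = 0 and S(S([μ̃_p+ξ_p, μ̃_p+ξ_p])) = 2·S([μ̃_p+ξ_p, μ̃_p+ξ_p]). -/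

import Mathlib

/-!
All three equivalences hold pointwise. `[M, M]` is twice the associator. For `M` symmetric and
`P` skew, `[M, P](a, b, c)` is minus the sum of the Leibniz defects of `P` at `(a, b, c)` and
`(c, a, b)`, and a function whose values at a triple and at its cyclic shift always cancel is
zero in the absence of 2-torsion. Finally `S [P, P] = -8 Jac(P)` with `Jac(P)` alternating, so `S` acts on
it by `6` and `S S [P, P] = 2 S [P, P]` means `Jac(P) = 0`. The symmetry of `μ̃` and the skewness
of `μ̃_p` are inherited from `μ`, `μ_p`, since a `B`-bilinear map on `B ⊗[k] A` is determined by
its values on `1 ⊗ A`.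
-/

open TensorProduct

section

/-- A map `f : W → W → W` is bilinear over the commutative ring `R`. -/
def IsBilinR (R : Type*) [CommRing R] {W : Type*} [AddCommGroup W] [Module R W]
    (f : W → W → W) : Prop :=
  (∀ a b c, f (a + b) c = f a c + f b c) ∧ (∀ (r : R) (a b), f (r • a) b = r • f a b) ∧
  (∀ a b c, f a (b + c) = f a b + f a c) ∧ (∀ (r : R) (a b), f a (r • b) = r • f a b)

/-- Gerstenhaber composition `(f ∘ g)(a,b,c) = f(g(a,b),c) − f(a,g(b,c))`. -/
def gcirc {W : Type*} [AddCommGroup W] (f g : W → W → W) : W → W → W → W :=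
  fun a b c => f (g a b) c - f a (g b c)

/-- Gerstenhaber bracket `[f,g] = f∘g + g∘f`. -/
def gbr {W : Type*} [AddCommGroup W] (f g : W → W → W) : W → W → W → W :=
  fun a b c => gcirc f g a b c + gcirc g f a b c

/-- The shuffle operator `S` on trilinear maps. -/
def Shuf {W : Type*} [AddCommGroup W] (F : W → W → W → W) : W → W → W → W :=
  fun a b c => F a b c + F a b c - F b a c - F a c b + F b c a + F c a b

section Operations

variable {R W : Type*} [CommRing R] [AddCommGroup W] [Module R W] {f g : W → W → W}

theorem IsBilinR.add (hf : IsBilinR R f) (hg : IsBilinR R g) :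
    IsBilinR R (fun x y => f x y + g x y) :=
  ⟨fun a b c => by simp only [hf.1, hg.1]; abel, fun r a b => by simp only [hf.2.1, hg.2.1, smul_add],
    fun a b c => by simp only [hf.2.2.1, hg.2.2.1]; abel,
    fun r a b => by simp only [hf.2.2.2, hg.2.2.2, smul_add]⟩

theorem IsBilinR.neg (hf : IsBilinR R f) : IsBilinR R (fun x y => -f x y) :=
  ⟨fun a b c => by simp only [hf.1, neg_add], fun r a b => by simp only [hf.2.1, smul_neg],
    fun a b c => by simp only [hf.2.2.1, neg_add], fun r a b => by simp only [hf.2.2.2, smul_neg]⟩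

theorem IsBilinR.flip (hf : IsBilinR R f) : IsBilinR R (fun x y => f y x) :=
  ⟨fun a b c => hf.2.2.1 c a b, fun r a b => hf.2.2.2 r b a,
    fun a b c => hf.1 b c a, fun r a b => hf.2.1 r b a⟩

end Operations

section BaseChange

variable {k A B : Type*} [CommRing k] [AddCommGroup A] [Module k A] [CommRing B] [Algebra k B]
  {f g : B ⊗[k] A → B ⊗[k] A → B ⊗[k] A}

theorem IsBilinR.ext_baseChange (hf : IsBilinR B f) (hg : IsBilinR B g)
    (h : ∀ a a' : A, f (1 ⊗ₜ a) (1 ⊗ₜ a') = g (1 ⊗ₜ a) (1 ⊗ₜ a')) : f = g := by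
  have hfg : LinearMap.mk₂ B f hf.1 hf.2.1 hf.2.2.1 hf.2.2.2
      = LinearMap.mk₂ B g hg.1 hg.2.1 hg.2.2.1 hg.2.2.2 := by
    ext a a'
    exact h a a'
  funext x y
  exact LinearMap.congr_fun₂ hfg x y

theorem IsBilinR.symm_of_baseChange (hf : IsBilinR B f) {μ : A → A → A}
    (hfμ : ∀ a a' : A, f (1 ⊗ₜ a) (1 ⊗ₜ a') = 1 ⊗ₜ μ a a') (hμ : ∀ a b, μ a b = μ b a)
    (x y : B ⊗[k] A) : f x y = f y x :=
  congr_fun₂ (hf.ext_baseChange hf.flip fun a a' => by rw [hfμ, hfμ, hμ]) x y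

theorem IsBilinR.skew_of_baseChange (hf : IsBilinR B f) {μ : A → A → A}
    (hfμ : ∀ a a' : A, f (1 ⊗ₜ a) (1 ⊗ₜ a') = 1 ⊗ₜ μ a a') (hμ : ∀ a b, μ a b = -μ b a)
    (x y : B ⊗[k] A) : f x y = -f y x :=
  congr_fun₂ (hf.ext_baseChange hf.flip.neg fun a a' => by rw [hfμ, hfμ, hμ, tmul_neg]) x y

end BaseChange

section Identities

variable {W : Type*} [AddCommGroup W] {M P : W → W → W}

theorem map_neg_left_of_add_left (hMl : ∀ a b c, M (a + b) c = M a c + M b c) (x y : W) :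
    M (-x) y = -M x y :=
  (AddMonoidHom.mk' (M · y) (hMl · · y)).map_neg x

theorem eq_zero_of_add_cyclic_eq_zero [IsAddTorsionFree W] {X : W → W → W → W}
    (h : ∀ a b c, X a b c + X c a b = 0) (a b c : W) : X a b c = 0 := by
  have h2 : 2 • X a b c = 0 := by
    calc 2 • X a b c = (X a b c + X c a b) - (X c a b + X b c a) + (X b c a + X a b c) := by abel
      _ = 0 := by rw [h a b c, h c a b, h b c a]; abel
  exact (nsmul_eq_zero_iff.mp h2).resolve_right two_ne_zero

theorem gbr_self_apply (a b c : W) : gbr M M a b c = 2 • (M (M a b) c - M a (M b c)) :=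
  (two_nsmul _).symm

theorem assoc_iff_gbr_self_eq_zero [IsAddTorsionFree W] :
    (∀ a b c, M (M a b) c = M a (M b c)) ↔ gbr M M = 0 := by
  simp [funext_iff, gbr_self_apply, sub_eq_zero]

def leibnizator (M P : W → W → W) (a b c : W) : W :=
  P a (M b c) - (M (P a b) c + M (P a c) b)

theorem gbr_apply_eq_neg_leibnizator (hMl : ∀ a b c, M (a + b) c = M a c + M b c)
    (hMs : ∀ a b, M a b = M b a) (hPs : ∀ a b, P a b = -P b a) (a b c : W) :
    gbr M P a b c = -(leibnizator M P a b c + leibnizator M P c a b) := by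
  simp only [gbr, gcirc, leibnizator]
  rw [hMs a (P b c), hPs (M a b) c, hPs c a, hPs c b]
  simp only [map_neg_left_of_add_left hMl]
  abel

theorem leibniz_iff_gbr_eq_zero [IsAddTorsionFree W]
    (hMl : ∀ a b c, M (a + b) c = M a c + M b c) (hMs : ∀ a b, M a b = M b a)
    (hPs : ∀ a b, P a b = -P b a) :
    (∀ a b c, P a (M b c) = M (P a b) c + M (P a c) b) ↔ gbr M P = 0 := by
  have hgbr := gbr_apply_eq_neg_leibnizator hMl hMs hPs
  simp only [← sub_eq_zero (a := P _ (M _ _)), funext_iff, Pi.zero_apply, hgbr, neg_eq_zero]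
  exact ⟨fun h a b c => by simp only [leibnizator, h, add_zero],
    fun h => eq_zero_of_add_cyclic_eq_zero (X := leibnizator M P) h⟩

def jacobiator (P : W → W → W) (a b c : W) : W :=
  P a (P b c) + P b (P c a) + P c (P a b)

theorem map_neg_right_of_skew (hPl : ∀ a b c, P (a + b) c = P a c + P b c)
    (hPs : ∀ a b, P a b = -P b a) (x y : W) : P x (-y) = -P x y := by
  rw [hPs x (-y), map_neg_left_of_add_left hPl, neg_neg, hPs y x]

theorem jacobiator_swap_left (hPl : ∀ a b c, P (a + b) c = P a c + P b c)
    (hPs : ∀ a b, P a b = -P b a) (a b c : W) : jacobiator P b a c = -jacobiator P a b c := by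
  simp only [jacobiator]
  rw [hPs a c, hPs c b, hPs b a]
  simp only [map_neg_right_of_skew hPl hPs]
  abel

theorem jacobiator_swap_right (hPl : ∀ a b c, P (a + b) c = P a c + P b c)
    (hPs : ∀ a b, P a b = -P b a) (a b c : W) : jacobiator P a c b = -jacobiator P a b c := by
  simp only [jacobiator]
  rw [hPs c b, hPs b a, hPs a c]
  simp only [map_neg_right_of_skew hPl hPs]
  abel

theorem shuf_gbr_self_apply (hPl : ∀ a b c, P (a + b) c = P a c + P b c)
    (hPs : ∀ a b, P a b = -P b a) (a b c : W) :
    Shuf (gbr P P) a b c = -(8 • jacobiator P a b c) := by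
  have hnl := map_neg_left_of_add_left hPl
  have hnr := map_neg_right_of_skew hPl hPs
  have hab : P (P a b) c = -P c (P a b) := hPs _ _
  have hbc : P (P b c) a = -P a (P b c) := hPs _ _
  have hca : P (P c a) b = -P b (P c a) := hPs _ _
  have hba : P (P b a) c = P c (P a b) := by rw [hPs b a, hnl, hab, neg_neg]
  have hac : P (P a c) b = P b (P c a) := by rw [hPs a c, hnl, hca, neg_neg]
  have hinner_cb : P a (P c b) = -P a (P b c) := by rw [hPs c b, hnr]
  have hinner_ac : P b (P a c) = -P b (P c a) := by rw [hPs a c, hnr]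
  simp only [Shuf, gbr, gcirc, jacobiator, hab, hbc, hca, hba, hac, hinner_cb, hinner_ac]
  abel

theorem shuf_apply_of_antisymm {F : W → W → W → W} (h12 : ∀ a b c, F b a c = -F a b c)
    (h23 : ∀ a b c, F a c b = -F a b c) (a b c : W) : Shuf F a b c = 6 • F a b c := by
  have hbca : F b c a = F a b c := by rw [h23, h12, neg_neg]
  have hcab : F c a b = F a b c := by rw [h12, h23, neg_neg]
  simp only [Shuf, h12 a b c, h23 a b c, hbca, hcab]
  abel

theorem jacobi_iff_shuf_shuf_gbr_self [IsAddTorsionFree W]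
    (hPl : ∀ a b c, P (a + b) c = P a c + P b c) (hPs : ∀ a b, P a b = -P b a) :
    (∀ a b c, jacobiator P a b c = 0) ↔ Shuf (Shuf (gbr P P)) = 2 • Shuf (gbr P P) := by
  have hS := shuf_gbr_self_apply hPl hPs
  have hSS := shuf_apply_of_antisymm (F := Shuf (gbr P P))
    (fun a b c => by rw [hS, hS, jacobiator_swap_left hPl hPs, smul_neg])
    (fun a b c => by rw [hS, hS, jacobiator_swap_right hPl hPs, smul_neg])
  have h62 (x : W) : 6 • x = 2 • x ↔ x = 0 := by
    rw [show 6 • x = 4 • x + 2 • x by rw [← add_nsmul], add_eq_right, nsmul_eq_zero_iff]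
    simp
  simp [funext_iff, hSS, h62, hS]

end Identities

variable {k : Type*} [Field k] [CharZero k]
variable {A : Type*} [AddCommGroup A] [Module k A]
variable {B : Type*} [CommRing B] [Algebra k B] [IsLocalRing B] [IsArtinianRing B]

theorem stmt10_general
    -- the Poisson structure (μ, μ_p) on A
    (μ μp : A → A → A)
    (hμsymm : ∀ a b, μ a b = μ b a)
    (hμpskew : ∀ a b, μp a b = - μp b a)
    -- the B-bilinear extensions of μ and μ_p to Ã = B ⊗[k] A
    (μt μpt : B ⊗[k] A → B ⊗[k] A → B ⊗[k] A)
    (hμtbil : IsBilinR B μt) (hμptbil : IsBilinR B μpt)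
    (hμtext : ∀ a a' : A, μt ((1 : B) ⊗ₜ[k] a) ((1 : B) ⊗ₜ[k] a') = (1 : B) ⊗ₜ[k] μ a a')
    (hμptext : ∀ a a' : A, μpt ((1 : B) ⊗ₜ[k] a) ((1 : B) ⊗ₜ[k] a') = (1 : B) ⊗ₜ[k] μp a a')
    -- the perturbations ξ, ξ_p with values in A ⊗ m
    (ξ ξp : B ⊗[k] A → B ⊗[k] A → B ⊗[k] A)
    (hξbil : IsBilinR B ξ) (hξpbil : IsBilinR B ξp)
    (hξsymm : ∀ x y, ξ x y = ξ y x) (hξpskew : ∀ x y, ξp x y = - ξp y x) :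
    -- (μ̃+ξ, μ̃_p+ξ_p) is a Poisson B-algebra structure on Ã iff Maurer–Cartan holds
    ((∀ x y z, (fun x y => μt x y + ξ x y) ((fun x y => μt x y + ξ x y) x y) z
        = (fun x y => μt x y + ξ x y) x ((fun x y => μt x y + ξ x y) y z)) ∧
     (∀ x y z, (fun x y => μpt x y + ξp x y) x ((fun x y => μt x y + ξ x y) y z)
        = (fun x y => μt x y + ξ x y) ((fun x y => μpt x y + ξp x y) x y) z
          + (fun x y => μt x y + ξ x y) ((fun x y => μpt x y + ξp x y) x z) y) ∧
     (∀ x y z, (fun x y => μpt x y + ξp x y) x ((fun x y => μpt x y + ξp x y) y z)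
          + (fun x y => μpt x y + ξp x y) y ((fun x y => μpt x y + ξp x y) z x)
          + (fun x y => μpt x y + ξp x y) z ((fun x y => μpt x y + ξp x y) x y) = 0))
    ↔
    (gbr (fun x y => μt x y + ξ x y) (fun x y => μt x y + ξ x y) = 0 ∧
     gbr (fun x y => μt x y + ξ x y) (fun x y => μpt x y + ξp x y) = 0 ∧
     Shuf (Shuf (gbr (fun x y => μpt x y + ξp x y) (fun x y => μpt x y + ξp x y)))
       = 2 • Shuf (gbr (fun x y => μpt x y + ξp x y) (fun x y => μpt x y + ξp x y))) := by
  have : IsAddTorsionFree (B ⊗[k] A) := .of_isTorsionFree k _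
  have hMsymm (x y : B ⊗[k] A) : μt x y + ξ x y = μt y x + ξ y x := by
    rw [hμtbil.symm_of_baseChange hμtext hμsymm, hξsymm]
  have hPskew (x y : B ⊗[k] A) : μpt x y + ξp x y = -(μpt y x + ξp y x) := by
    rw [hμptbil.skew_of_baseChange hμptext hμpskew, hξpskew, neg_add]
  exact and_congr (assoc_iff_gbr_self_eq_zero (M := fun x y => μt x y + ξ x y)) <|
    and_congr (leibniz_iff_gbr_eq_zero (hμtbil.add hξbil).1 hMsymm hPskew)
      (jacobi_iff_shuf_shuf_gbr_self (hμptbil.add hξpbil).1 hPskew)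

/-- Let `(A,μ,μ_p)` be a Poisson `k`-algebra, `B` a commutative local Artinian
`k`-algebra with maximal ideal `m` and residue field `k`, and `Ã := A ⊗_k B` (realized
as the base change `B ⊗[k] A`) with the `B`-bilinear extensions `μ̃`, `μ̃_p` of `μ`, `μ_p`.
If `ξ, ξ_p : Ã × Ã → A ⊗ m` are `B`-bilinear with `ξ` symmetric and `ξ_p` skew-symmetric,
then `(μ̃+ξ, μ̃_p+ξ_p)` is a Poisson `B`-algebra structure on `Ã` (commutative associative
product and skew bracket satisfying Leibniz and Jacobi, reducing mod `m` to the given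
structure on `A`) iff the Maurer–Cartan equations hold:
`[μ̃+ξ,μ̃+ξ] = 0`, `[μ̃+ξ,μ̃_p+ξ_p] = 0` and `S(S([μ̃_p+ξ_p,μ̃_p+ξ_p])) = 2·S([μ̃_p+ξ_p,μ̃_p+ξ_p])`. -/
theorem stmt10
    -- the Poisson structure (μ, μ_p) on A
    (μ μp : A → A → A) (hμbil : IsBilinR k μ) (hμpbil : IsBilinR k μp)
    (hμsymm : ∀ a b, μ a b = μ b a) (hμassoc : ∀ a b c, μ (μ a b) c = μ a (μ b c))
    (hμpskew : ∀ a b, μp a b = - μp b a)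
    (hLeibniz : ∀ a b c, μp a (μ b c) = μ (μp a b) c + μ (μp a c) b)
    (hJacobi : ∀ a b c, μp a (μp b c) + μp b (μp c a) + μp c (μp a b) = 0)
    -- B has residue field k
    (hres : Function.Bijective (algebraMap k (IsLocalRing.ResidueField B)))
    -- the B-bilinear extensions of μ and μ_p to Ã = B ⊗[k] A
    (μt μpt : B ⊗[k] A → B ⊗[k] A → B ⊗[k] A)
    (hμtbil : IsBilinR B μt) (hμptbil : IsBilinR B μpt)
    (hμtext : ∀ a a' : A, μt ((1 : B) ⊗ₜ[k] a) ((1 : B) ⊗ₜ[k] a') = (1 : B) ⊗ₜ[k] μ a a')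
    (hμptext : ∀ a a' : A, μpt ((1 : B) ⊗ₜ[k] a) ((1 : B) ⊗ₜ[k] a') = (1 : B) ⊗ₜ[k] μp a a')
    -- the perturbations ξ, ξ_p with values in A ⊗ m
    (ξ ξp : B ⊗[k] A → B ⊗[k] A → B ⊗[k] A)
    (hξbil : IsBilinR B ξ) (hξpbil : IsBilinR B ξp)
    (hξsymm : ∀ x y, ξ x y = ξ y x) (hξpskew : ∀ x y, ξp x y = - ξp y x)
    (hξval : ∀ x y, ξ x y ∈
      (IsLocalRing.maximalIdeal B) • (⊤ : Submodule B (B ⊗[k] A)))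
    (hξpval : ∀ x y, ξp x y ∈
      (IsLocalRing.maximalIdeal B) • (⊤ : Submodule B (B ⊗[k] A))) :
    -- (μ̃+ξ, μ̃_p+ξ_p) is a Poisson B-algebra structure on Ã iff Maurer–Cartan holds
    ((∀ x y z, (fun x y => μt x y + ξ x y) ((fun x y => μt x y + ξ x y) x y) z
        = (fun x y => μt x y + ξ x y) x ((fun x y => μt x y + ξ x y) y z)) ∧
     (∀ x y z, (fun x y => μpt x y + ξp x y) x ((fun x y => μt x y + ξ x y) y z)
        = (fun x y => μt x y + ξ x y) ((fun x y => μpt x y + ξp x y) x y) z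
          + (fun x y => μt x y + ξ x y) ((fun x y => μpt x y + ξp x y) x z) y) ∧
     (∀ x y z, (fun x y => μpt x y + ξp x y) x ((fun x y => μpt x y + ξp x y) y z)
          + (fun x y => μpt x y + ξp x y) y ((fun x y => μpt x y + ξp x y) z x)
          + (fun x y => μpt x y + ξp x y) z ((fun x y => μpt x y + ξp x y) x y) = 0))
    ↔
    (gbr (fun x y => μt x y + ξ x y) (fun x y => μt x y + ξ x y) = 0 ∧
     gbr (fun x y => μt x y + ξ x y) (fun x y => μpt x y + ξp x y) = 0 ∧
     Shuf (Shuf (gbr (fun x y => μpt x y + ξp x y) (fun x y => μpt x y + ξp x y)))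
       = 2 • Shuf (gbr (fun x y => μpt x y + ξp x y) (fun x y => μpt x y + ξp x y))) :=
  stmt10_general μ μp hμsymm hμpskew μt μpt hμtbil hμptbil hμtext hμptext ξ ξp hξbil hξpbil hξsymm
    hξpskew

end
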